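/- Define g₃(r) = (4r + 5r² − 8r³ + 2r⁴ + 10r⁵ + 3r⁶)/(2(1−r)²(1+r)²) + 2·log(1−r) for r ∈ [0,1). Then g₃′(r) = (3r − 2r² + 13r³ + 19r⁴ + 7r⁵ − 5r⁶ − 3r⁷)/((1−r)³(1+r)³) ≥ 0, so g₃ is monotonically increasing on [0,1) and g₃(r) ≥ g₃(0) = 0 for all r ∈ [0,1). -/

import Mathlib

open Set

/-- `g₃(r) = (4r + 5r² - 8r³ + 2r⁴ + 10r⁵ + 3r⁶)/(2(1-r)²(1+r)²) + 2 log(1-r)`. -/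
noncomputable def g₃ (r : ℝ) : ℝ :=
  (4 * r + 5 * r ^ 2 - 8 * r ^ 3 + 2 * r ^ 4 + 10 * r ^ 5 + 3 * r ^ 6) /
    (2 * (1 - r) ^ 2 * (1 + r) ^ 2) + 2 * Real.log (1 - r)

lemma g₃_hasDeriv {r : ℝ} (h1 : -1 < r) (h2 : r < 1) :
    HasDerivAt g₃ ((3 * r - 2 * r ^ 2 + 13 * r ^ 3 + 19 * r ^ 4 + 7 * r ^ 5
      - 5 * r ^ 6 - 3 * r ^ 7) / ((1 - r) ^ 3 * (1 + r) ^ 3)) r := by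
  have ha : (1 - r) ≠ 0 := by linarith
  have hb : (1 + r) ≠ 0 := by linarith
  have hD : (2 * (1 - r) ^ 2 * (1 + r) ^ 2) ≠ 0 := by positivity
  have hN : HasDerivAt (fun x : ℝ => 4 * x + 5 * x ^ 2 - 8 * x ^ 3 + 2 * x ^ 4
      + 10 * x ^ 5 + 3 * x ^ 6)
      (4 + 10 * r - 24 * r ^ 2 + 8 * r ^ 3 + 50 * r ^ 4 + 18 * r ^ 5) r := by
    have h := (((((((hasDerivAt_id r).const_mul (4:ℝ)).add
      ((hasDerivAt_pow 2 r).const_mul (5:ℝ))).sub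
      ((hasDerivAt_pow 3 r).const_mul (8:ℝ))).add
      ((hasDerivAt_pow 4 r).const_mul (2:ℝ))).add
      ((hasDerivAt_pow 5 r).const_mul (10:ℝ))).add
      ((hasDerivAt_pow 6 r).const_mul (3:ℝ)))
    refine h.congr_deriv ?_
    push_cast
    ring
  have hone : HasDerivAt (fun x : ℝ => 1 - x) (-1) r := by
    simpa using (hasDerivAt_id r).const_sub 1
  have hone' : HasDerivAt (fun x : ℝ => 1 + x) 1 r := by
    simpa using (hasDerivAt_id r).const_add 1
  have hDd : HasDerivAt (fun x : ℝ => 2 * (1 - x) ^ 2 * (1 + x) ^ 2)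
      ((2 * (2 * (1 - r) * (-1))) * (1 + r) ^ 2
        + 2 * (1 - r) ^ 2 * (2 * (1 + r) * 1)) r := by
    have h := (((hone.pow 2).const_mul (2:ℝ)).mul (hone'.pow 2))
    refine h.congr_deriv ?_
    push_cast [Pi.pow_apply]
    ring
  have hq := hN.div hDd hD
  have hlog : HasDerivAt (fun x : ℝ => 2 * Real.log (1 - x))
      (2 * ((1 - r)⁻¹ * (-1))) r := by
    exact ((Real.hasDerivAt_log ha).comp r hone).const_mul 2
  have h := hq.add hlog
  refine h.congr_deriv ?_
  field_simp
  ring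

theorem stmt14 :
    (∀ r ∈ Ico (0:ℝ) 1,
        deriv g₃ r = (3 * r - 2 * r ^ 2 + 13 * r ^ 3 + 19 * r ^ 4 + 7 * r ^ 5
            - 5 * r ^ 6 - 3 * r ^ 7) / ((1 - r) ^ 3 * (1 + r) ^ 3) ∧ 0 ≤ deriv g₃ r) ∧
    MonotoneOn g₃ (Ico (0:ℝ) 1) ∧
    g₃ 0 = 0 ∧
    ∀ r ∈ Ico (0:ℝ) 1, 0 ≤ g₃ r := by
  have key : ∀ r ∈ Ico (0:ℝ) 1,
      deriv g₃ r = (3 * r - 2 * r ^ 2 + 13 * r ^ 3 + 19 * r ^ 4 + 7 * r ^ 5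
        - 5 * r ^ 6 - 3 * r ^ 7) / ((1 - r) ^ 3 * (1 + r) ^ 3) ∧ 0 ≤ deriv g₃ r := by
    intro r hr
    obtain ⟨hr0, hr1⟩ := hr
    have hd := (g₃_hasDeriv (by linarith) hr1).deriv
    refine ⟨hd, ?_⟩
    rw [hd]
    apply div_nonneg
    · nlinarith [sq_nonneg r, sq_nonneg (r^2), sq_nonneg (r^3), pow_nonneg hr0 3,
        pow_nonneg hr0 4, pow_nonneg hr0 5, pow_nonneg hr0 2, pow_nonneg hr0 6,
        pow_nonneg hr0 7, pow_le_one₀ hr0 hr1.le (n := 4), pow_le_one₀ hr0 hr1.le (n := 6)]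
    · have : (0:ℝ) < 1 - r := by linarith
      positivity
  have hmono : MonotoneOn g₃ (Ico (0:ℝ) 1) := by
    apply monotoneOn_of_deriv_nonneg (convex_Ico 0 1)
    · intro r hr
      exact (g₃_hasDeriv (by linarith [hr.1]) hr.2).continuousAt.continuousWithinAt
    · intro r hr
      rw [interior_Ico] at hr
      exact (g₃_hasDeriv (by linarith [hr.1]) hr.2).differentiableAt.differentiableWithinAt
    · intro r hr
      rw [interior_Ico] at hr
      exact (key r ⟨hr.1.le, hr.2⟩).2
  have hzero : g₃ 0 = 0 := by
    simp [g₃]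
  refine ⟨key, hmono, hzero, fun r hr => ?_⟩
  have := hmono (left_mem_Ico.mpr one_pos) hr hr.1
  rwa [hzero] at this
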